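/- arXiv:2203.13423 — 4 statements merged into one kernel-verified Lean document; each statement's English description precedes it below -/
import Mathlib

section
/- Let V be the return of the fixed-arm policy π^a in a single-type departing bandit with click probability P_a and departure probability L_a (so V ≤ N - 1 where N is geometric with parameter q := L_a(1-P_a)). Then the centered return V - E[V] is sub-exponential with parameters (τ², b) where τ = b = -8e / ln(1 - q); i.e., for all |γ| < 1/b, E[exp(γ(V - E[V]))] ≤ exp(γ²τ²/2). -/
/-!
Since `V ≤ N - 1`, the event `V > t` forces `N ≥ ⌊t⌋ + 2`, so `P(V > t) ≤ (1 - q)^t = e^{-ct}` with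
`c = -log (1 - q)`. The layer-cake formula turns this tail into `E e^{cV/2} ≤ 2`, which gives
`c E[V] / 2 ≤ 1` and hence `E e^{(c/2)|V - E[V]|} ≤ 2e`. The Taylor bound `e^x ≤ 1 + x + x² e^{|x|}`
and `sup_{y ≥ 0} y² e^{-βy} = (2/(eβ))²` with `β = c/2 - |γ| ≥ c/4` then bound the centred moment
generating function by `1 + 2e γ² (2/(eβ))² ≤ exp (γ² (8e/c)² / 2)`.
-/

open MeasureTheory Real

namespace Real

theorem exp_le_one_add_add_sq_mul_exp_abs (t : ℝ) : exp t ≤ 1 + t + t ^ 2 * exp |t| := by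
  have hsq : t ^ 2 ≤ t ^ 2 * exp |t| :=
    le_mul_of_one_le_right (sq_nonneg t) (one_le_exp (abs_nonneg t))
  rcases le_or_gt |t| 1 with ht | ht
  · linarith [(abs_le.1 (abs_exp_sub_one_sub_id_le ht)).2]
  rcases lt_abs.1 ht with ht | ht
  · rw [abs_of_pos (by linarith)]
    linarith [le_mul_of_one_le_left (exp_pos t).le (by nlinarith : 1 ≤ t ^ 2)]
  · nlinarith [exp_le_one_iff.2 (by linarith : t ≤ 0)]

theorem sq_mul_exp_neg_mul_le {β x : ℝ} (hβ : 0 < β) (hx : 0 ≤ x) :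
    x ^ 2 * exp (-(β * x)) ≤ (2 / (exp 1 * β)) ^ 2 := by
  have hhalf : x * exp (-(β * x / 2)) ≤ 2 / (exp 1 * β) := by
    have h := mul_exp_neg_le_exp_neg_one (β * x / 2)
    rw [exp_neg 1, ← one_div, le_div_iff₀ (exp_pos 1)] at h
    rw [le_div_iff₀ (by positivity)]
    nlinarith
  calc x ^ 2 * exp (-(β * x)) = (x * exp (-(β * x / 2))) ^ 2 := by
        rw [mul_pow, ← exp_nat_mul]; ring_nf
    _ ≤ (2 / (exp 1 * β)) ^ 2 := pow_le_pow_left₀ (by positivity) hhalf 2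

end Real

namespace MeasureTheory

variable {Ω : Type*} [MeasurableSpace Ω] {μ : Measure Ω}

theorem AEStronglyMeasurable.aemeasurable_of_exp_mul {f : Ω → ℝ} {γ : ℝ} (hγ : γ ≠ 0)
    (h : AEStronglyMeasurable (fun ω => exp (γ * f ω)) μ) : AEMeasurable f μ := by
  simpa [Function.comp_def, hγ] using
    (measurable_log.comp_aemeasurable h.aemeasurable).div_const γ

theorem measure_add_one_le_le_of_geometric {N : Ω → ℕ} {q : ℝ} (hq : q ∈ Set.Ioo (0 : ℝ) 1)
    (hgeo : ∀ n : ℕ, 1 ≤ n → μ {ω | N ω = n} = ENNReal.ofReal ((1 - q) ^ (n - 1) * q))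
    (k : ℕ) : μ {ω | k + 1 ≤ N ω} ≤ ENNReal.ofReal ((1 - q) ^ k) := by
  obtain ⟨hq0, hq1⟩ := hq
  have h1q : 0 ≤ 1 - q := by linarith
  have hcover : {ω | k + 1 ≤ N ω} ⊆ ⋃ n : ℕ, {ω | N ω = k + 1 + n} :=
    fun ω (hω : k + 1 ≤ N ω) =>
      Set.mem_iUnion.2 ⟨N ω - (k + 1), show N ω = k + 1 + (N ω - (k + 1)) by omega⟩
  calc μ {ω | k + 1 ≤ N ω} ≤ ∑' n : ℕ, μ {ω | N ω = k + 1 + n} :=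
        (measure_mono hcover).trans (measure_iUnion_le _)
    _ = ∑' n : ℕ, ENNReal.ofReal ((1 - q) ^ k * q * (1 - q) ^ n) := by
        congr! 2 with n
        rw [hgeo _ (by omega), show k + 1 + n - 1 = k + n by omega, pow_add]
        ring_nf
    _ = ENNReal.ofReal ((1 - q) ^ k) := by
        rw [← ENNReal.ofReal_tsum_of_nonneg (fun n => by positivity)
            ((summable_geometric_of_lt_one h1q (by linarith)).mul_left _),
          tsum_mul_left, tsum_geometric_of_lt_one h1q (by linarith), sub_sub_cancel,
          mul_assoc, mul_inv_cancel₀ hq0.ne', mul_one]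

theorem measure_lt_le_rpow_of_le_geometric {N : Ω → ℕ} {q : ℝ} (hq : q ∈ Set.Ioo (0 : ℝ) 1)
    (hgeo : ∀ n : ℕ, 1 ≤ n → μ {ω | N ω = n} = ENNReal.ofReal ((1 - q) ^ (n - 1) * q))
    {X : Ω → ℝ} (hX : ∀ ω, X ω ≤ N ω - 1) {t : ℝ} (ht : 0 ≤ t) :
    μ {ω | t < X ω} ≤ ENNReal.ofReal ((1 - q) ^ t) := by
  have hsub : {ω | t < X ω} ⊆ {ω | ⌊t⌋₊ + 1 + 1 ≤ N ω} := fun ω (hω : t < X ω) => by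
    have : (⌊t⌋₊ : ℝ) + 1 < N ω := by linarith [Nat.floor_le ht, hX ω]
    exact (show ⌊t⌋₊ + 1 < N ω by exact_mod_cast this)
  calc μ {ω | t < X ω} ≤ ENNReal.ofReal ((1 - q) ^ (⌊t⌋₊ + 1)) :=
        (measure_mono hsub).trans (measure_add_one_le_le_of_geometric hq hgeo _)
    _ ≤ ENNReal.ofReal ((1 - q) ^ t) := by
        gcongr
        rw [← rpow_natCast]
        exact rpow_le_rpow_of_exponent_ge (by linarith [hq.2]) (by linarith [hq.1])
          (by push_cast; linarith [Nat.lt_floor_add_one t])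

variable [IsProbabilityMeasure μ]

theorem lintegral_exp_mul_le_of_measure_lt_le_exp {X : Ω → ℝ} {c s : ℝ}
    (hX : AEMeasurable X μ) (hX0 : 0 ≤ᵐ[μ] X) (hs : 0 ≤ s) (hsc : s < c)
    (htail : ∀ t > 0, μ {ω | t < X ω} ≤ ENNReal.ofReal (exp (-(c * t)))) :
    ∫⁻ ω, ENNReal.ofReal (exp (s * X ω)) ∂μ ≤ ENNReal.ofReal (c / (c - s)) := by
  have hg : Continuous fun t => s * exp (s * t) := by fun_prop
  have hprim : ∀ x, ∫ t in (0 : ℝ)..x, s * exp (s * t) = exp (s * x) - 1 := by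
    intro x
    rw [intervalIntegral.integral_eq_sub_of_hasDerivAt (f := fun t => exp (s * t))
      (fun t _ => by simpa [mul_comm] using ((hasDerivAt_id t).const_mul s).exp)
      (hg.intervalIntegrable _ _)]
    simp
  have hlayer := lintegral_comp_eq_lintegral_meas_lt_mul μ hX0 hX
    (fun t _ => hg.intervalIntegrable _ _) (ae_of_all _ fun t => by positivity)
  have hrate : s - c < 0 := by linarith
  have hcs : c - s ≠ 0 := by linarith
  calc ∫⁻ ω, ENNReal.ofReal (exp (s * X ω)) ∂μ
      ≤ ∫⁻ ω, (1 + ENNReal.ofReal (∫ t in (0 : ℝ)..X ω, s * exp (s * t))) ∂μ := by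
        refine lintegral_mono fun ω => ?_
        rw [hprim, ← ENNReal.ofReal_one]
        exact (ENNReal.ofReal_le_ofReal (by linarith)).trans ENNReal.ofReal_add_le
    _ = 1 + ∫⁻ t in Set.Ioi 0, μ {ω | t < X ω} * ENNReal.ofReal (s * exp (s * t)) := by
        rw [lintegral_add_left measurable_const, hlayer]
        simp
    _ ≤ 1 + ∫⁻ t in Set.Ioi 0, ENNReal.ofReal (s * exp ((s - c) * t)) := by
        refine add_le_add_right
          (setLIntegral_mono' (measurableSet_Ioi (a := (0 : ℝ))) fun t ht => ?_) 1
        calc μ {ω | t < X ω} * ENNReal.ofReal (s * exp (s * t))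
            ≤ ENNReal.ofReal (exp (-(c * t))) * ENNReal.ofReal (s * exp (s * t)) := by
              gcongr; exact htail t ht
          _ = ENNReal.ofReal (s * exp ((s - c) * t)) := by
              rw [← ENNReal.ofReal_mul (exp_pos _).le, mul_left_comm, ← exp_add]
              ring_nf
    _ = 1 + ENNReal.ofReal (s / (c - s)) := by
        rw [← ofReal_integral_eq_lintegral_ofReal
          ((integrableOn_exp_mul_Ioi hrate 0).const_mul s) (ae_of_all _ fun t => by positivity),
          integral_const_mul, integral_exp_mul_Ioi hrate]
        rw [mul_zero, exp_zero, neg_div, ← div_neg, neg_sub, mul_one_div]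
    _ = ENNReal.ofReal (c / (c - s)) := by
        rw [← ENNReal.ofReal_one, ← ENNReal.ofReal_add zero_le_one (by positivity)]
        congr 1
        field_simp
        ring

theorem integrable_exp_mul_of_measure_lt_le_exp {X : Ω → ℝ} {c s : ℝ}
    (hX : AEMeasurable X μ) (hX0 : 0 ≤ᵐ[μ] X) (hs : 0 ≤ s) (hsc : s < c)
    (htail : ∀ t > 0, μ {ω | t < X ω} ≤ ENNReal.ofReal (exp (-(c * t)))) :
    Integrable (fun ω => exp (s * X ω)) μ := by
  refine ⟨(hX.const_mul s).exp.aestronglyMeasurable, ?_⟩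
  rw [hasFiniteIntegral_iff_ofReal (ae_of_all _ fun ω => (exp_pos _).le)]
  exact (lintegral_exp_mul_le_of_measure_lt_le_exp hX hX0 hs hsc htail).trans_lt
    ENNReal.ofReal_lt_top

theorem integral_exp_mul_le_of_measure_lt_le_exp {X : Ω → ℝ} {c s : ℝ}
    (hX : AEMeasurable X μ) (hX0 : 0 ≤ᵐ[μ] X) (hs : 0 ≤ s) (hsc : s < c)
    (htail : ∀ t > 0, μ {ω | t < X ω} ≤ ENNReal.ofReal (exp (-(c * t)))) :
    ∫ ω, exp (s * X ω) ∂μ ≤ c / (c - s) := by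
  rw [integral_eq_lintegral_of_nonneg_ae (ae_of_all _ fun ω => (exp_pos _).le)
    (hX.const_mul s).exp.aestronglyMeasurable]
  exact ENNReal.toReal_le_of_le_ofReal (div_nonneg (by linarith) (by linarith))
    (lintegral_exp_mul_le_of_measure_lt_le_exp hX hX0 hs hsc htail)

theorem integral_exp_mul_le_of_integral_exp_mul_abs_le {Y : Ω → ℝ} {γ l A : ℝ}
    (hY : Integrable Y μ) (hY0 : ∫ ω, Y ω ∂μ = 0)
    (hint : Integrable (fun ω => exp (l * |Y ω|)) μ) (hA : ∫ ω, exp (l * |Y ω|) ∂μ ≤ A)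
    (hγ : |γ| < l) :
    ∫ ω, exp (γ * Y ω) ∂μ ≤ exp (γ ^ 2 * (2 / (exp 1 * (l - |γ|))) ^ 2 * A) := by
  set K := (2 / (exp 1 * (l - |γ|))) ^ 2
  have hpt : ∀ y, exp (γ * y) ≤ 1 + γ * y + γ ^ 2 * K * exp (l * |y|) := by
    intro y
    have hsplit : (γ * y) ^ 2 * exp |γ * y|
        = γ ^ 2 * (|y| ^ 2 * exp (-((l - |γ|) * |y|))) * exp (l * |y|) := by
      rw [mul_assoc, mul_assoc, ← exp_add, abs_mul, sq_abs]; ring_nf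
    have hmom := sq_mul_exp_neg_mul_le (sub_pos.2 hγ) (abs_nonneg y)
    have := exp_le_one_add_add_sq_mul_exp_abs (γ * y)
    rw [hsplit] at this
    nlinarith [sq_nonneg γ, exp_pos (l * |y|), mul_le_mul_of_nonneg_left hmom (sq_nonneg γ)]
  have hbound : Integrable (fun ω => 1 + γ * Y ω + γ ^ 2 * K * exp (l * |Y ω|)) μ :=
    ((integrable_const 1).add (hY.const_mul γ)).add (hint.const_mul _)
  calc ∫ ω, exp (γ * Y ω) ∂μ
      ≤ ∫ ω, (1 + γ * Y ω + γ ^ 2 * K * exp (l * |Y ω|)) ∂μ :=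
        integral_mono_of_nonneg (ae_of_all _ fun _ => (exp_pos _).le) hbound
          (ae_of_all _ fun ω => hpt (Y ω))
    _ = 1 + γ ^ 2 * K * ∫ ω, exp (l * |Y ω|) ∂μ := by
        rw [integral_add (f := fun ω => 1 + γ * Y ω) ((integrable_const 1).add (hY.const_mul γ))
            (hint.const_mul _),
          integral_add (integrable_const 1) (hY.const_mul γ), integral_const_mul,
          integral_const_mul, hY0]
        simp
    _ ≤ 1 + γ ^ 2 * K * A := by gcongr
    _ ≤ exp (γ ^ 2 * K * A) := by linarith [add_one_le_exp (γ ^ 2 * K * A)]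

theorem integral_exp_mul_sub_integral_le {X : Ω → ℝ} {γ l B : ℝ}
    (hX : AEMeasurable X μ) (hX0 : 0 ≤ᵐ[μ] X)
    (hint : Integrable (fun ω => exp (l * X ω)) μ) (hB : ∫ ω, exp (l * X ω) ∂μ ≤ B)
    (hγ : |γ| < l) :
    ∫ ω, exp (γ * (X ω - ∫ ω', X ω' ∂μ)) ∂μ
      ≤ exp (γ ^ 2 * (2 / (exp 1 * (l - |γ|))) ^ 2 * (exp (B - 1) * B)) := by
  have hl : 0 < l := (abs_nonneg γ).trans_lt hγ
  have hXint : Integrable X μ := by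
    refine (hint.div_const l).mono' hX.aestronglyMeasurable ?_
    filter_upwards [hX0] with ω hω
    rw [Real.norm_of_nonneg hω, le_div_iff₀ hl]
    linarith [add_one_le_exp (l * X ω)]
  set m := ∫ ω, X ω ∂μ
  have hm0 : 0 ≤ m := integral_nonneg_of_ae hX0
  have hlm : l * m ≤ B - 1 := by
    calc l * m = ∫ ω, l * X ω ∂μ := (integral_const_mul l X).symm
      _ ≤ ∫ ω, (exp (l * X ω) - 1) ∂μ :=
          integral_mono (hXint.const_mul l) (hint.sub (integrable_const 1))
            fun ω => by linarith [add_one_le_exp (l * X ω)]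
      _ ≤ B - 1 := by
          rw [integral_sub hint (integrable_const 1)]
          simpa using hB
  have hpt : ∀ᵐ ω ∂μ, exp (l * |X ω - m|) ≤ exp (B - 1) * exp (l * X ω) := by
    filter_upwards [hX0] with ω (hω : 0 ≤ X ω)
    rw [← exp_add, exp_le_exp]
    have : |X ω - m| ≤ X ω + m := abs_le.2 ⟨by linarith, by linarith⟩
    nlinarith
  have hint' : Integrable (fun ω => exp (l * |X ω - m|)) μ :=
    (hint.const_mul _).mono' ((hX.sub_const m).abs.const_mul l).exp.aestronglyMeasurable
      (by filter_upwards [hpt] with ω h; rwa [Real.norm_of_nonneg (exp_pos _).le])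
  refine integral_exp_mul_le_of_integral_exp_mul_abs_le (hXint.sub (integrable_const m))
    (by simp [integral_sub hXint (integrable_const m), m]) hint' ?_ hγ
  calc ∫ ω, exp (l * |X ω - m|) ∂μ ≤ ∫ ω, exp (B - 1) * exp (l * X ω) ∂μ :=
        integral_mono_ae hint' (hint.const_mul _) hpt
    _ ≤ exp (B - 1) * B := by
        rw [integral_const_mul]
        gcongr

theorem integral_exp_mul_sub_integral_le_of_measure_lt_le_exp {X : Ω → ℝ} {c γ : ℝ}
    (hX : AEMeasurable X μ) (hX0 : 0 ≤ᵐ[μ] X) (hc : 0 < c)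
    (htail : ∀ t > 0, μ {ω | t < X ω} ≤ ENNReal.ofReal (exp (-(c * t))))
    (hγ : |γ| < c / (8 * exp 1)) :
    ∫ ω, exp (γ * (X ω - ∫ ω', X ω' ∂μ)) ∂μ ≤ exp (γ ^ 2 * (8 * exp 1 / c) ^ 2 / 2) := by
  have hs : 0 ≤ c / 2 := by positivity
  have hsc : c / 2 < c := by linarith
  have hmgf : ∫ ω, exp (c / 2 * X ω) ∂μ ≤ 2 :=
    (integral_exp_mul_le_of_measure_lt_le_exp hX hX0 hs hsc htail).trans_eq
      (by field_simp; norm_num)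
  have he : 2 ≤ exp 1 := by linarith [add_one_le_exp 1]
  have hβ : c / 4 ≤ c / 2 - |γ| := by
    have : c / (8 * exp 1) ≤ c / 4 :=
      div_le_div_of_nonneg_left hc.le (by norm_num) (by linarith)
    linarith
  have hβc : 2 / (exp 1 * (c / 2 - |γ|)) ≤ 8 / (exp 1 * c) := by
    rw [div_le_div_iff₀ (by nlinarith [exp_pos 1]) (by positivity)]
    nlinarith [exp_pos 1]
  calc _ ≤ exp (γ ^ 2 * (2 / (exp 1 * (c / 2 - |γ|))) ^ 2 * (exp (2 - 1) * 2)) :=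
        integral_exp_mul_sub_integral_le hX hX0
          (integrable_exp_mul_of_measure_lt_le_exp hX hX0 hs hsc htail) hmgf (by linarith)
    _ ≤ exp (γ ^ 2 * ((8 / (exp 1 * c)) ^ 2 * (exp 1 * 2))) := by
        norm_num only [mul_assoc]
        gcongr
        exact div_nonneg zero_le_two (by nlinarith [exp_pos 1])
    _ ≤ exp (γ ^ 2 * (8 * exp 1 / c) ^ 2 / 2) := by
        rw [mul_div_assoc]
        gcongr
        field_simp
        nlinarith [pow_le_pow_left₀ zero_le_two he 3]

end MeasureTheory

/-- Let `V` be the return of a fixed-arm policy in a single-type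
departing bandit: `0 ≤ V ≤ N - 1` where `N` is geometric with parameter
`q = L_a (1-P_a) ∈ (0,1)`.  Then the centered return `V - E[V]` is
`(τ², b)`-sub-exponential with `τ = b = -8e / ln(1-q)`: for all `|γ| < 1/b`,
`E[exp(γ (V - E[V]))] ≤ exp(γ² τ² / 2)`. -/
theorem return_is_subexponential {Ω : Type*} [MeasurableSpace Ω]
    (μ : Measure Ω) [IsProbabilityMeasure μ]
    (q : ℝ) (hq : q ∈ Set.Ioo (0 : ℝ) 1)
    (N : Ω → ℕ) (V : Ω → ℝ)
    (hgeo : ∀ n : ℕ, 1 ≤ n →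
      μ {ω | N ω = n} = ENNReal.ofReal ((1 - q) ^ (n - 1) * q))
    (hV : ∀ ω, 0 ≤ V ω ∧ V ω ≤ (N ω : ℝ) - 1) :
    ∀ γ : ℝ, |γ| < 1 / (-8 * Real.exp 1 / Real.log (1 - q)) →
      ∫ ω, Real.exp (γ * (V ω - ∫ ω', V ω' ∂μ)) ∂μ
        ≤ Real.exp (γ ^ 2 * (-8 * Real.exp 1 / Real.log (1 - q)) ^ 2 / 2) := by
  intro γ hγ
  have h1q : 0 < 1 - q := by linarith [hq.2]
  set c := -log (1 - q) with hc_def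
  have hc : 0 < c := neg_pos.2 (log_neg h1q (by linarith [hq.1]))
  have hb : -8 * exp 1 / log (1 - q) = 8 * exp 1 / c := by
    rw [hc_def, div_neg, neg_mul, neg_div]
  rw [hb, one_div_div] at hγ
  rw [hb]
  rcases eq_or_ne γ 0 with rfl | hγ0
  · simp
  -- a non-measurable integrand has Bochner integral `0`
  by_cases hmeas : AEStronglyMeasurable (fun ω => exp (γ * (V ω - ∫ ω', V ω' ∂μ))) μ
  swap
  · rw [integral_non_aestronglyMeasurable hmeas]
    positivity
  have hVm : AEMeasurable V μ := by
    simpa using (hmeas.aemeasurable_of_exp_mul hγ0).add_const (∫ ω', V ω' ∂μ)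
  refine integral_exp_mul_sub_integral_le_of_measure_lt_le_exp hVm
    (ae_of_all _ fun ω => (hV ω).1) hc (fun t ht => ?_) hγ
  convert measure_lt_le_rpow_of_le_geometric hq hgeo (fun ω => (hV ω).2) ht.le using 2
  rw [rpow_def_of_pos h1q, hc_def, neg_mul, neg_neg, mul_comm]
end

section
/- In the two-type, two-category departing bandit with closed-form return E[V^π(b)] = Σ_{i=1}^∞ (b·P_{1,x}^{m_{1,i}}P_{2,x}^{m_{2,i}} + (1-b)·P_{1,y}^{m_{1,i}}P_{2,y}^{m_{2,i}}), if P_{1,x} ≥ P_{2,x} and P_{1,y} ≥ P_{2,y} (Category 1 is a dominant row), then the fixed-arm policy always recommending Category 1 achieves at least the expected return of any other deterministic policy. -/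
open Finset

def cnt1 (a : ℕ → Bool) (i : ℕ) : ℕ := ((Finset.range i).filter (fun j => a j = true)).card

def cnt2 (a : ℕ → Bool) (i : ℕ) : ℕ := ((Finset.range i).filter (fun j => a j = false)).card

/-- Closed-form expected return of the deterministic category sequence `a`
(`true` = Category 1, `false` = Category 2) with prior belief `b` on type x. -/
noncomputable def twoTypeReturn (p1x p2x p1y p2y b : ℝ) (a : ℕ → Bool) : ℝ :=
  ∑' i : ℕ, (b * p1x ^ cnt1 a (i + 1) * p2x ^ cnt2 a (i + 1)
      + (1 - b) * p1y ^ cnt1 a (i + 1) * p2y ^ cnt2 a (i + 1))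

lemma cnt_add (a : ℕ → Bool) (i : ℕ) : cnt1 a i + cnt2 a i = i := by
  unfold cnt1 cnt2
  have h : Finset.filter (fun j => a j = false) (Finset.range i)
      = Finset.filter (fun j => ¬ (a j = true)) (Finset.range i) := by
    apply Finset.filter_congr; intro j _; simp
  rw [h, Finset.card_filter_add_card_filter_not (fun j => a j = true),
    Finset.card_range]

lemma cnt1_const (i : ℕ) : cnt1 (fun _ => true) i = i := by
  unfold cnt1; simp

lemma cnt2_const (i : ℕ) : cnt2 (fun _ => true) i = 0 := by
  unfold cnt2; simp

lemma pow_mix_le {p q : ℝ} (hq : 0 ≤ q) (hpq : q ≤ p) (m n : ℕ) :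
    p ^ m * q ^ n ≤ p ^ (m + n) := by
  rw [pow_add]
  have hp : 0 ≤ p := le_trans hq hpq
  exact mul_le_mul_of_nonneg_left (pow_le_pow_left₀ hq hpq n) (pow_nonneg hp m)

/-- If Category 1 is a dominant row (`P₁ₓ ≥ P₂ₓ` and
`P₁ᵧ ≥ P₂ᵧ`, all probabilities in `(0,1)`), then always recommending
Category 1 achieves at least the expected return of any other deterministic
policy. -/
theorem dominant_row_optimal
    (p1x p2x p1y p2y b : ℝ)
    (h1x : p1x ∈ Set.Ioo (0 : ℝ) 1) (h2x : p2x ∈ Set.Ioo (0 : ℝ) 1)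
    (h1y : p1y ∈ Set.Ioo (0 : ℝ) 1) (h2y : p2y ∈ Set.Ioo (0 : ℝ) 1)
    (hb : b ∈ Set.Icc (0 : ℝ) 1)
    (hrowx : p2x ≤ p1x) (hrowy : p2y ≤ p1y) :
    ∀ a : ℕ → Bool,
      twoTypeReturn p1x p2x p1y p2y b a
        ≤ twoTypeReturn p1x p2x p1y p2y b (fun _ => true) := by
  intro a
  obtain ⟨h1x0, h1x1⟩ := h1x
  obtain ⟨h2x0, _⟩ := h2x
  obtain ⟨h1y0, h1y1⟩ := h1y
  obtain ⟨h2y0, _⟩ := h2y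
  obtain ⟨hb0, hb1⟩ := hb
  have hb1' : 0 ≤ 1 - b := by linarith
  have hterm : ∀ i : ℕ,
      b * p1x ^ cnt1 a (i + 1) * p2x ^ cnt2 a (i + 1)
        + (1 - b) * p1y ^ cnt1 a (i + 1) * p2y ^ cnt2 a (i + 1)
      ≤ b * p1x ^ cnt1 (fun _ => true) (i + 1) * p2x ^ cnt2 (fun _ => true) (i + 1)
        + (1 - b) * p1y ^ cnt1 (fun _ => true) (i + 1) * p2y ^ cnt2 (fun _ => true) (i + 1) := by
    intro i
    simp only [cnt1_const, cnt2_const, pow_zero, mul_one]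
    have hx := pow_mix_le (le_of_lt h2x0) hrowx (cnt1 a (i+1)) (cnt2 a (i+1))
    have hy := pow_mix_le (le_of_lt h2y0) hrowy (cnt1 a (i+1)) (cnt2 a (i+1))
    rw [cnt_add] at hx hy
    have := mul_le_mul_of_nonneg_left hx hb0
    have := mul_le_mul_of_nonneg_left hy hb1'
    nlinarith
  have hnn : ∀ i : ℕ, 0 ≤ b * p1x ^ cnt1 a (i + 1) * p2x ^ cnt2 a (i + 1)
        + (1 - b) * p1y ^ cnt1 a (i + 1) * p2y ^ cnt2 a (i + 1) := by
    intro i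
    have := pow_nonneg (le_of_lt h1x0) (cnt1 a (i+1))
    have := pow_nonneg (le_of_lt h2x0) (cnt2 a (i+1))
    have := pow_nonneg (le_of_lt h1y0) (cnt1 a (i+1))
    have := pow_nonneg (le_of_lt h2y0) (cnt2 a (i+1))
    positivity
  have hsumT : Summable (fun i : ℕ =>
      b * p1x ^ cnt1 (fun _ => true) (i + 1) * p2x ^ cnt2 (fun _ => true) (i + 1)
        + (1 - b) * p1y ^ cnt1 (fun _ => true) (i + 1) * p2y ^ cnt2 (fun _ => true) (i + 1)) := by
    simp only [cnt1_const, cnt2_const, pow_zero, mul_one]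
    apply Summable.add
    · apply Summable.mul_left
      exact ((summable_geometric_of_lt_one (le_of_lt h1x0) h1x1).comp_injective
        (add_left_injective 1))
    · apply Summable.mul_left
      exact ((summable_geometric_of_lt_one (le_of_lt h1y0) h1y1).comp_injective
        (add_left_injective 1))
  have hsumA : Summable (fun i : ℕ =>
      b * p1x ^ cnt1 a (i + 1) * p2x ^ cnt2 a (i + 1)
        + (1 - b) * p1y ^ cnt1 a (i + 1) * p2y ^ cnt2 a (i + 1)) :=
    Summable.of_nonneg_of_le hnn hterm hsumT
  exact Summable.tsum_le_tsum hterm hsumA hsumT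
end

section
/- In the two-type, two-category departing bandit with dominant diagonal structure (P_{1,x} ≥ P_{2,y} > P_{1,y} and P_{2,y} > P_{2,x}, all probabilities in (0,1)), for every finite horizon H, the optimal H-step deterministic category sequence is either (1,1,…,1) or (2,2,…,2); i.e., among all sequences (a₁,…,a_H) ∈ {1,2}^H, the H-term return Σ_{i=1}^H (b·P_{1,x}^{m_{1,i}}P_{2,x}^{m_{2,i}} + (1-b)·P_{1,y}^{m_{1,i}}P_{2,y}^{m_{2,i}}) is maximized by a constant sequence. -/
/-!
Write `S n q = ∑_{i<n} q^i`. The return of a sequence is `b · R_x + (1 - b) · R_y`, where the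
return of a single type satisfies `R (n+1) a = r · (1 + R n (tail a))`, `r` being the success
probability of the first category pulled. Generalising the weights `(b, 1 - b)` to arbitrary
nonnegative `(β, γ)`, induction on the horizon reduces the claim to the two sequences that switch
once: one pull of category 1 followed by category 2 forever, and vice versa. Each is dominated
by one of the two constant sequences; since all four returns are linear in `(β, γ)`, this is a
cross inequality between the geometric sums `S n q` and their divided differences
`(S n x - S n y) / (x - y)`, which comes from the monotonicity of `q ↦ S M q / S R q` for `R ≤ M`.
-/

open Finset

/-- `H`-step expected return of the deterministic category sequence `a`
(`true` = Category 1, `false` = Category 2) with prior belief `b`. -/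
noncomputable def finiteReturn (p1x p2x p1y p2y b : ℝ) (H : ℕ) (a : ℕ → Bool) : ℝ :=
  ∑ i ∈ Finset.range H, (b * p1x ^ cnt1 a (i + 1) * p2x ^ cnt2 a (i + 1)
      + (1 - b) * p1y ^ cnt1 a (i + 1) * p2y ^ cnt2 a (i + 1))

def geomSum (n : ℕ) (q : ℝ) : ℝ := ∑ i ∈ range n, q ^ i

def geomSumSlope (n : ℕ) (x y : ℝ) : ℝ := ∑ j ∈ range n, x ^ j * geomSum (n - 1 - j) y

lemma geomSum_succ (n : ℕ) (q : ℝ) : geomSum (n + 1) q = 1 + q * geomSum n q := by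
  rw [geomSum, geom_sum_succ, add_comm, geomSum]

lemma geomSum_nonneg {q : ℝ} (hq : 0 ≤ q) (n : ℕ) : 0 ≤ geomSum n q := by
  unfold geomSum; positivity

@[gcongr]
lemma geomSum_mono {p q : ℝ} (hp : 0 ≤ p) (hpq : p ≤ q) (n : ℕ) : geomSum n p ≤ geomSum n q :=
  sum_le_sum fun i _ => pow_le_pow_left₀ hp hpq i

lemma geomSum_mul_geomSum_le {p q : ℝ} (hp : 0 ≤ p) (hpq : p ≤ q) {R M : ℕ} (hRM : R ≤ M) :
    geomSum M p * geomSum R q ≤ geomSum M q * geomSum R p := by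
  have hsplit (r : ℝ) : geomSum M r = geomSum R r + ∑ k ∈ Ico R M, r ^ k :=
    (sum_range_add_sum_Ico _ hRM).symm
  have htail : (∑ k ∈ Ico R M, p ^ k) * geomSum R q ≤ (∑ k ∈ Ico R M, q ^ k) * geomSum R p := by
    rw [geomSum, geomSum, sum_mul_sum, sum_mul_sum]
    refine sum_le_sum fun k hk => sum_le_sum fun i hi => ?_
    obtain ⟨d, rfl⟩ := Nat.exists_eq_add_of_le ((mem_range.1 hi).le.trans (mem_Ico.1 hk).1)
    have hd : p ^ d ≤ q ^ d := pow_le_pow_left₀ hp hpq d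
    have : 0 ≤ p ^ i * q ^ i := mul_nonneg (pow_nonneg hp i) (pow_nonneg (hp.trans hpq) i)
    rw [pow_add, pow_add]
    nlinarith
  rw [hsplit p, hsplit q]
  linarith

lemma geomSumSlope_succ (n : ℕ) (x y : ℝ) :
    geomSumSlope (n + 1) x y = geomSum n y + x * geomSumSlope n x y := by
  rw [geomSumSlope, sum_range_succ', geomSumSlope, mul_sum, add_comm]
  congr 1
  · simp
  · refine sum_congr rfl fun j _ => ?_
    rw [show n + 1 - 1 - (j + 1) = n - 1 - j by omega, pow_succ]
    ring

lemma geomSum_sub_geomSum (n : ℕ) (x y : ℝ) :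
    geomSum n x - geomSum n y = (x - y) * geomSumSlope n x y := by
  induction n with
  | zero => simp [geomSum, geomSumSlope]
  | succ n ih => rw [geomSum_succ, geomSum_succ, geomSumSlope_succ]; linear_combination x * ih

lemma geomSumSlope_comm (n : ℕ) (x y : ℝ) : geomSumSlope n x y = geomSumSlope n y x := by
  rcases eq_or_ne x y with rfl | hxy
  · rfl
  · refine mul_left_cancel₀ (sub_ne_zero.2 hxy) ?_
    rw [← geomSum_sub_geomSum, ← neg_sub y x, ← neg_sub (geomSum n y), geomSum_sub_geomSum]
    ring

lemma geomSumSlope_nonneg {x y : ℝ} (hx : 0 ≤ x) (hy : 0 ≤ y) (n : ℕ) :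
    0 ≤ geomSumSlope n x y :=
  sum_nonneg fun j _ => mul_nonneg (pow_nonneg hx j) (geomSum_nonneg hy _)

@[gcongr]
lemma geomSumSlope_mono_left {x x' y : ℝ} (hx : 0 ≤ x) (hxx' : x ≤ x') (hy : 0 ≤ y) (n : ℕ) :
    geomSumSlope n x y ≤ geomSumSlope n x' y :=
  sum_le_sum fun j _ =>
    mul_le_mul_of_nonneg_right (pow_le_pow_left₀ hx hxx' j) (geomSum_nonneg hy _)

@[gcongr]
lemma geomSumSlope_mono_right {x y y' : ℝ} (hx : 0 ≤ x) (hy : 0 ≤ y) (hyy' : y ≤ y') (n : ℕ) :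
    geomSumSlope n x y ≤ geomSumSlope n x y' :=
  sum_le_sum fun j _ => mul_le_mul_of_nonneg_left (geomSum_mono hy hyy' _) (pow_nonneg hx j)

lemma geomSum_mul_geomSumSlope_le {x p q : ℝ} (hx : 0 ≤ x) (hp : 0 ≤ p) (hpq : p ≤ q) (n : ℕ) :
    geomSum n p * geomSumSlope n x q ≤ geomSum n q * geomSumSlope n x p := by
  rw [geomSumSlope, geomSumSlope, mul_sum, mul_sum]
  refine sum_le_sum fun j _ => ?_
  have := geomSum_mul_geomSum_le hp hpq (show n - 1 - j ≤ n by omega)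
  have := pow_nonneg hx j
  nlinarith

lemma add_le_max_of_mul_le {β γ m₁ m₂ a₁ a₂ b₁ b₂ : ℝ} (hβ : 0 ≤ β) (hγ : 0 ≤ γ)
    (ha : m₁ ≤ a₁) (hb : m₂ ≤ b₂) (h : (m₂ - a₂) * (m₁ - b₁) ≤ (a₁ - m₁) * (b₂ - m₂)) :
    β * m₁ + γ * m₂ ≤ max (β * a₁ + γ * a₂) (β * b₁ + γ * b₂) := by
  by_contra! hlt
  obtain ⟨hA, hB⟩ := max_lt_iff.1 hlt
  have h₁ : β * (a₁ - m₁) < γ * (m₂ - a₂) := by linarith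
  have h₂ : γ * (b₂ - m₂) < β * (m₁ - b₁) := by linarith
  have := mul_lt_mul'' h₁ h₂ (mul_nonneg hβ (sub_nonneg.2 ha)) (mul_nonneg hγ (sub_nonneg.2 hb))
  nlinarith [mul_le_mul_of_nonneg_left h (mul_nonneg hβ hγ)]

section Switch

variable {p1x p2x p1y p2y β γ : ℝ}

lemma oneThenTwo_le_max_const (hβ : 0 ≤ β) (hγ : 0 ≤ γ) (h2x : 0 ≤ p2x)
    (h1y : 0 ≤ p1y) (hdd1 : p2y ≤ p1x) (hdd2 : p1y ≤ p2y) (hdd3 : p2x ≤ p2y) (n : ℕ) :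
    β * (p1x * geomSum n p2x) + γ * (p1y * geomSum n p2y) ≤
      max (β * (p1x * geomSum n p1x) + γ * (p1y * geomSum n p1y))
        (β * (p2x * geomSum n p2x) + γ * (p2y * geomSum n p2y)) := by
  have h2y : 0 ≤ p2y := h1y.trans hdd2
  have h1x : 0 ≤ p1x := h2y.trans hdd1
  have hdd : p2x ≤ p1x := hdd3.trans hdd1
  have := geomSum_nonneg h2x n
  have := geomSum_nonneg h2y n
  have := geomSumSlope_nonneg h2y h1y n
  have := geomSumSlope_nonneg h2y h2x n
  refine add_le_max_of_mul_le hβ hγ (by gcongr) (by gcongr) ?_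
  have hkey : p1y * geomSumSlope n p2y p1y * geomSum n p2x ≤
      p1x * geomSumSlope n p1x p2x * geomSum n p2y :=
    calc p1y * geomSumSlope n p2y p1y * geomSum n p2x
        ≤ p2y * geomSumSlope n p2y p2y * geomSum n p2x := by gcongr
      _ ≤ p2y * geomSumSlope n p2y p2x * geomSum n p2y := by
          nlinarith [geomSum_mul_geomSumSlope_le h2y h2x hdd3 n]
      _ ≤ p1x * geomSumSlope n p1x p2x * geomSum n p2y := by gcongr
  have := mul_le_mul_of_nonneg_left hkey (mul_nonneg (sub_nonneg.2 hdd2) (sub_nonneg.2 hdd))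
  linear_combination this + (p1y * (p1x - p2x) * geomSum n p2x) * geomSum_sub_geomSum n p2y p1y
    - (p1x * (p2y - p1y) * geomSum n p2y) * geomSum_sub_geomSum n p1x p2x

lemma twoThenOne_le_max_const (hβ : 0 ≤ β) (hγ : 0 ≤ γ) (h2x : 0 ≤ p2x)
    (h1y : 0 ≤ p1y) (hdd1 : p2y ≤ p1x) (hdd2 : p1y ≤ p2y) (hdd3 : p2x ≤ p2y) (n : ℕ) :
    β * (p2x * geomSum n p1x) + γ * (p2y * geomSum n p1y) ≤
      max (β * (p1x * geomSum n p1x) + γ * (p1y * geomSum n p1y))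
        (β * (p2x * geomSum n p2x) + γ * (p2y * geomSum n p2y)) := by
  have h2y : 0 ≤ p2y := h1y.trans hdd2
  have h1x : 0 ≤ p1x := h2y.trans hdd1
  have hdd : p2x ≤ p1x := hdd3.trans hdd1
  have := geomSum_nonneg h1x n
  have := geomSum_nonneg h1y n
  have := geomSumSlope_nonneg h2y h1y n
  have := geomSumSlope_nonneg h1x h2x n
  refine add_le_max_of_mul_le hβ hγ (by gcongr) (by gcongr) ?_
  have hkey : p2x * geomSumSlope n p1x p2x * geomSum n p1y ≤
      p2y * geomSumSlope n p2y p1y * geomSum n p1x :=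
    calc p2x * geomSumSlope n p1x p2x * geomSum n p1y
        ≤ p2x * geomSumSlope n p2y p1x * geomSum n p1y := by
          rw [geomSumSlope_comm n p2y]; gcongr
      _ ≤ p2x * geomSumSlope n p2y p1y * geomSum n p1x := by
          nlinarith [geomSum_mul_geomSumSlope_le h2y h1y (hdd2.trans hdd1) n]
      _ ≤ p2y * geomSumSlope n p2y p1y * geomSum n p1x := by gcongr
  have := mul_le_mul_of_nonneg_left hkey (mul_nonneg (sub_nonneg.2 hdd2) (sub_nonneg.2 hdd))
  linear_combination this + (p2x * (p2y - p1y) * geomSum n p1y) * geomSum_sub_geomSum n p1x p2x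
    - (p2y * (p1x - p2x) * geomSum n p1x) * geomSum_sub_geomSum n p2y p1y

end Switch

noncomputable def typeReturn (p q : ℝ) (n : ℕ) (a : ℕ → Bool) : ℝ :=
  ∑ i ∈ range n, p ^ cnt1 a (i + 1) * q ^ cnt2 a (i + 1)

lemma finiteReturn_eq (p1x p2x p1y p2y b : ℝ) (H : ℕ) (a : ℕ → Bool) :
    finiteReturn p1x p2x p1y p2y b H a =
      b * typeReturn p1x p2x H a + (1 - b) * typeReturn p1y p2y H a := by
  simp only [finiteReturn, typeReturn, mul_sum, ← sum_add_distrib, mul_assoc]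

lemma pow_cnt1_mul_pow_cnt2_succ (p q : ℝ) (a : ℕ → Bool) (i : ℕ) :
    p ^ cnt1 a (i + 1) * q ^ cnt2 a (i + 1) =
      (bif a 0 then p else q) *
        (p ^ cnt1 (fun j => a (j + 1)) i * q ^ cnt2 (fun j => a (j + 1)) i) := by
  simp only [cnt1, cnt2, card_filter, sum_range_succ']
  cases a 0 <;> simp [pow_succ] <;> ring

lemma typeReturn_succ (p q : ℝ) (n : ℕ) (a : ℕ → Bool) :
    typeReturn p q (n + 1) a =
      (bif a 0 then p else q) * (1 + typeReturn p q n (fun j => a (j + 1))) := by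
  simp only [typeReturn, sum_range_succ', pow_cnt1_mul_pow_cnt2_succ p q a, mul_add, mul_sum]
  simp [cnt1, cnt2, add_comm]

lemma typeReturn_const (p q : ℝ) (n : ℕ) (c : Bool) :
    typeReturn p q n (fun _ => c) = (bif c then p else q) * geomSum n (bif c then p else q) := by
  induction n with
  | zero => simp [typeReturn, geomSum]
  | succ n ih => rw [typeReturn_succ, ih, geomSum_succ]

lemma weighted_typeReturn_le_max_const {p1x p2x p1y p2y β γ : ℝ} (h2x : 0 ≤ p2x)
    (h1y : 0 ≤ p1y) (hdd1 : p2y ≤ p1x) (hdd2 : p1y ≤ p2y) (hdd3 : p2x ≤ p2y) (n : ℕ)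
    (hβ : 0 ≤ β) (hγ : 0 ≤ γ) (a : ℕ → Bool) :
    β * typeReturn p1x p2x n a + γ * typeReturn p1y p2y n a ≤
      max (β * typeReturn p1x p2x n (fun _ => true) + γ * typeReturn p1y p2y n (fun _ => true))
        (β * typeReturn p1x p2x n (fun _ => false) +
          γ * typeReturn p1y p2y n (fun _ => false)) := by
  simp only [typeReturn_const, cond_true, cond_false]
  have h2y : 0 ≤ p2y := h1y.trans hdd2
  have h1x : 0 ≤ p1x := h2y.trans hdd1
  induction n generalizing β γ a with
  | zero => simp [typeReturn, geomSum]
  | succ n ih =>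
    set r₁ := bif a 0 then p1x else p2x
    set r₂ := bif a 0 then p1y else p2y
    have hr₁ : 0 ≤ r₁ := by unfold r₁; cases a 0 <;> assumption
    have hr₂ : 0 ≤ r₂ := by unfold r₂; cases a 0 <;> assumption
    have hfirst : β * typeReturn p1x p2x (n + 1) a + γ * typeReturn p1y p2y (n + 1) a ≤
        max (β * (r₁ * geomSum (n + 1) p1x) + γ * (r₂ * geomSum (n + 1) p1y))
          (β * (r₁ * geomSum (n + 1) p2x) + γ * (r₂ * geomSum (n + 1) p2y)) := by
      have := ih (mul_nonneg hβ hr₁) (mul_nonneg hγ hr₂) (fun j => a (j + 1))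
      rw [typeReturn_succ, typeReturn_succ]
      calc β * (r₁ * (1 + typeReturn p1x p2x n fun j => a (j + 1)))
            + γ * (r₂ * (1 + typeReturn p1y p2y n fun j => a (j + 1)))
          = (β * r₁ + γ * r₂) + (β * r₁ * typeReturn p1x p2x n (fun j => a (j + 1))
            + γ * r₂ * typeReturn p1y p2y n (fun j => a (j + 1))) := by ring
        _ ≤ (β * r₁ + γ * r₂) +
              max (β * r₁ * (p1x * geomSum n p1x) + γ * r₂ * (p1y * geomSum n p1y))
                (β * r₁ * (p2x * geomSum n p2x) + γ * r₂ * (p2y * geomSum n p2y)) := by gcongr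
        _ = _ := by rw [← max_add_add_left]; simp only [geomSum_succ]; congr 1 <;> ring
    refine hfirst.trans ?_
    simp only [r₁, r₂]
    cases a 0
    · exact max_le (twoThenOne_le_max_const hβ hγ h2x h1y hdd1 hdd2 hdd3 _) (le_max_right _ _)
    · exact max_le (le_max_left _ _) (oneThenTwo_le_max_const hβ hγ h2x h1y hdd1 hdd2 hdd3 _)

theorem dominant_diagonal_constant_optimal_general
    (p1x p2x p1y p2y b : ℝ) (H : ℕ)
    (h2x : p2x ∈ Set.Ioo (0 : ℝ) 1)
    (h1y : p1y ∈ Set.Ioo (0 : ℝ) 1)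
    (hb : b ∈ Set.Icc (0 : ℝ) 1)
    (hdd1 : p2y ≤ p1x) (hdd2 : p1y < p2y) (hdd3 : p2x < p2y) :
    ∃ c : Bool, ∀ a : ℕ → Bool,
      finiteReturn p1x p2x p1y p2y b H a
        ≤ finiteReturn p1x p2x p1y p2y b H (fun _ => c) := by
  have hbound (a : ℕ → Bool) : finiteReturn p1x p2x p1y p2y b H a ≤
      max (finiteReturn p1x p2x p1y p2y b H fun _ => true)
        (finiteReturn p1x p2x p1y p2y b H fun _ => false) := by
    simpa only [finiteReturn_eq] using weighted_typeReturn_le_max_const h2x.1.le h1y.1.le hdd1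
      hdd2.le hdd3.le H hb.1 (sub_nonneg.2 hb.2) a
  rcases max_choice (finiteReturn p1x p2x p1y p2y b H fun _ => true)
      (finiteReturn p1x p2x p1y p2y b H fun _ => false) with h | h
  exacts [⟨true, fun a => (hbound a).trans_eq h⟩, ⟨false, fun a => (hbound a).trans_eq h⟩]

/-- Under the dominant-diagonal structure
(`P₁ₓ ≥ P₂ᵧ > P₁ᵧ` and `P₂ᵧ > P₂ₓ`), for every finite horizon `H` the optimal
`H`-step deterministic category sequence is constant: either all Category 1
or all Category 2. -/
theorem dominant_diagonal_constant_optimal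
    (p1x p2x p1y p2y b : ℝ) (H : ℕ)
    (h1x : p1x ∈ Set.Ioo (0 : ℝ) 1) (h2x : p2x ∈ Set.Ioo (0 : ℝ) 1)
    (h1y : p1y ∈ Set.Ioo (0 : ℝ) 1) (h2y : p2y ∈ Set.Ioo (0 : ℝ) 1)
    (hb : b ∈ Set.Icc (0 : ℝ) 1)
    (hdd1 : p2y ≤ p1x) (hdd2 : p1y < p2y) (hdd3 : p2x < p2y) :
    ∃ c : Bool, ∀ a : ℕ → Bool,
      finiteReturn p1x p2x p1y p2y b H a
        ≤ finiteReturn p1x p2x p1y p2y b H (fun _ => c) :=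
  dominant_diagonal_constant_optimal_general p1x p2x p1y p2y b H h2x h1y hb hdd1 hdd2 hdd3
end

section
/- In the two-type two-category departing bandit with all click probabilities at most 1-ε, let Π_H be the set of all (a,h)-threshold policies with a ∈ {1,2}, h ∈ {0,1,…,H}. Then E[V^{π*}] - max_{π ∈ Π_H} E[V^π] ≤ (1-ε)^H/ε, where π* is the optimal policy. -/
/-! A user survives `i` rounds with probability at most `(1 - ε) ^ i`, so the rounds after `H`
contribute at most `(1 - ε) ^ H / ε` to any return, and it suffices that on the first `H` rounds
some threshold word does at least as well as the word of `astar`.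

That is a statement about finite words. Let type `x` click category `true` with probability `r`
and `false` with probability `s`, type `y` with `u` and `v`. The return is linear in the type
weights `(b, c)`, and each round multiplies them by the click probabilities of its category.
Flipping the categories reduces to `s ≤ r`. If also `v ≤ u`, recommending `true` forever is best.
Otherwise either the ratio `b / c` moves monotonically along every word (`u ≤ v ≤ s ≤ r`, or the
mirror image `s ≤ r ≤ u ≤ v`), and an exchange argument turns any word into a threshold word; or
each category reinforces itself (`u ≤ r` and `s ≤ v`), and dynamic programming reduces everything
to comparing `true :: replicate n false` with the two constant words. That comparison rests on
`geomSum p K / geomSum p n` being antitone in `p` for `K ≤ n`. -/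

open Finset

/-- The `(c, h)`-threshold policy: recommend category `c` for the first `h`
iterations, then the other category forever after. -/
def thresholdSeq (c : Bool) (h : ℕ) : ℕ → Bool := fun j => if j < h then c else !c

namespace DepartingBandit

section Geometric

variable {x y : ℝ}

def geomSum (p : ℝ) (n : ℕ) : ℝ := ∑ i ∈ range n, p ^ i

lemma geomSum_succ (p : ℝ) (n : ℕ) : geomSum p (n + 1) = 1 + p * geomSum p n := by
  rw [geomSum, geom_sum_succ, add_comm, geomSum]

lemma geomSum_succ' (p : ℝ) (n : ℕ) : geomSum p (n + 1) = p ^ n + geomSum p n :=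
  geom_sum_succ'

lemma geomSum_nonneg (hx : 0 ≤ x) (n : ℕ) : 0 ≤ geomSum x n :=
  sum_nonneg fun i _ => pow_nonneg hx i

lemma geomSum_le_geomSum (hx : 0 ≤ x) (hxy : x ≤ y) (n : ℕ) : geomSum x n ≤ geomSum y n :=
  sum_le_sum fun i _ => pow_le_pow_left₀ hx hxy i

lemma geomSum_mul_geomSum_le (hx : 0 ≤ x) (hxy : x ≤ y) {K n : ℕ} (hKn : K ≤ n) :
    geomSum y K * geomSum x n ≤ geomSum x K * geomSum y n := by
  induction n, hKn using Nat.le_induction with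
  | base => rw [mul_comm]
  | succ n hKn ih =>
    have hstep : geomSum y K * x ^ n ≤ geomSum x K * y ^ n := by
      rw [geomSum, geomSum, sum_mul, sum_mul]
      refine sum_le_sum fun t ht => ?_
      obtain ⟨m, hm⟩ := Nat.exists_eq_add_of_le (hKn.trans' (mem_range.1 ht).le)
      have hy : 0 ≤ y := hx.trans hxy
      calc y ^ t * x ^ n = (x ^ t * y ^ t) * x ^ m := by rw [hm, pow_add]; ring
        _ ≤ (x ^ t * y ^ t) * y ^ m := by gcongr
        _ = x ^ t * y ^ n := by rw [hm, pow_add]; ring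
    rw [geomSum_succ', geomSum_succ']
    linarith

/-- `(geomSum x n - geomSum y n) / (x - y)`, written without the division. -/
def geomSumSlope (x y : ℝ) (n : ℕ) : ℝ := ∑ i ∈ range n, x ^ i * geomSum y (n - 1 - i)

lemma geomSum_sub_geomSum (x y : ℝ) (n : ℕ) :
    geomSum x n - geomSum y n = (x - y) * geomSumSlope x y n := by
  induction n with
  | zero => simp [geomSum, geomSumSlope]
  | succ n ih =>
    have hslope : geomSumSlope x y (n + 1)
        = geomSumSlope x y n + ∑ i ∈ range n, x ^ i * y ^ (n - 1 - i) := by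
      rw [geomSumSlope, sum_range_succ, geomSumSlope, ← sum_add_distrib]
      simp only [Nat.add_sub_cancel, Nat.sub_self, geomSum, sum_range_zero, mul_zero, add_zero]
      refine sum_congr rfl fun i hi => ?_
      rw [show n - i = n - 1 - i + 1 by grind, geom_sum_succ', mul_add, add_comm]
    have hgeom := (Commute.all x y).geom_sum₂_mul n
    rw [hslope, geomSum_succ', geomSum_succ', mul_add, ← ih]
    linear_combination -hgeom

lemma geomSumSlope_nonneg (hx : 0 ≤ x) (hy : 0 ≤ y) (n : ℕ) : 0 ≤ geomSumSlope x y n :=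
  sum_nonneg fun i _ => mul_nonneg (pow_nonneg hx i) (geomSum_nonneg hy _)

lemma mul_geomSumSlope_mul_le {r s u v : ℝ} (hu : 0 ≤ u) (hur : u ≤ r) (hs : 0 ≤ s)
    (hsv : s ≤ v) (n : ℕ) :
    u * geomSumSlope u v n * geomSum s n ≤ r * geomSumSlope r s n * geomSum v n := by
  simp only [geomSumSlope, mul_sum, sum_mul]
  refine sum_le_sum fun i _ => ?_
  have hr : 0 ≤ r := hu.trans hur
  have hE := geomSum_mul_geomSum_le hs hsv (show n - 1 - i ≤ n by omega)
  calc u * (u ^ i * geomSum v (n - 1 - i)) * geomSum s n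
      = u ^ (i + 1) * (geomSum v (n - 1 - i) * geomSum s n) := by ring
    _ ≤ r ^ (i + 1) * (geomSum s (n - 1 - i) * geomSum v n) := by
      gcongr
      exact mul_nonneg (geomSum_nonneg (hs.trans hsv) _) (geomSum_nonneg hs n)
    _ = r * (r ^ i * geomSum s (n - 1 - i)) * geomSum v n := by ring

end Geometric

/-- A word lists the categories recommended in successive rounds. `typeReturn p q w` is the
expected number of clicks on `w` of a user who clicks `true` with probability `p` and `false`
with probability `q`, and leaves at the first round without a click. -/
def typeReturn (p q : ℝ) : List Bool → ℝ
  | [] => 0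
  | true :: w => p * (1 + typeReturn p q w)
  | false :: w => q * (1 + typeReturn p q w)

/-- The type weights `b`, `c` are not normalized: after a prefix of a word they are the
probabilities of being of each type and still present. -/
def mixtureReturn (r s u v b c : ℝ) (w : List Bool) : ℝ :=
  b * typeReturn r s w + c * typeReturn u v w

def thresholdWord (c : Bool) (h n : ℕ) : List Bool :=
  List.replicate h c ++ List.replicate (n - h) (!c)

section Words

variable {p q r s u v b c : ℝ}

lemma typeReturn_nonneg (hp : 0 ≤ p) (hq : 0 ≤ q) : ∀ w : List Bool, 0 ≤ typeReturn p q w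
  | [] => le_rfl
  | true :: w => mul_nonneg hp (by linarith [typeReturn_nonneg hp hq w])
  | false :: w => mul_nonneg hq (by linarith [typeReturn_nonneg hp hq w])

lemma typeReturn_map_not (p q : ℝ) :
    ∀ w : List Bool, typeReturn p q (w.map not) = typeReturn q p w
  | [] => rfl
  | true :: w => by simp [typeReturn, typeReturn_map_not p q w]
  | false :: w => by simp [typeReturn, typeReturn_map_not p q w]

lemma typeReturn_replicate_true (p q : ℝ) (n : ℕ) :
    typeReturn p q (List.replicate n true) = p * geomSum p n := by
  induction n with
  | zero => simp [typeReturn, geomSum]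
  | succ n ih => rw [List.replicate_succ, typeReturn, ih, geomSum_succ]

lemma typeReturn_replicate_false (p q : ℝ) (n : ℕ) :
    typeReturn p q (List.replicate n false) = q * geomSum q n := by
  rw [← typeReturn_map_not, List.map_replicate, Bool.not_false, typeReturn_replicate_true]

lemma typeReturn_append_singleton (p q : ℝ) (x : Bool) : ∀ w : List Bool,
    typeReturn p q (w ++ [x]) =
      typeReturn p q w + p ^ (w ++ [x]).count true * q ^ (w ++ [x]).count false
  | [] => by cases x <;> simp [typeReturn]
  | y :: w => by
    rw [List.cons_append]
    cases y <;>
      simp [typeReturn, typeReturn_append_singleton p q x w, List.count_cons, pow_succ] <;> ring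

lemma typeReturn_le_replicate_true (hq : 0 ≤ q) (hqp : q ≤ p) : ∀ w : List Bool,
    typeReturn p q w ≤ typeReturn p q (List.replicate w.length true)
  | [] => le_rfl
  | x :: w => by
    have hw := typeReturn_le_replicate_true hq hqp w
    have hp : 0 ≤ p := hq.trans hqp
    have h1 : 0 ≤ 1 + typeReturn p q w := by linarith [typeReturn_nonneg hp hq w]
    cases x
    · exact mul_le_mul hqp (by linarith) h1 hp
    · exact mul_le_mul_of_nonneg_left (by linarith) hp

lemma mixtureReturn_cons_true (w : List Bool) :
    mixtureReturn r s u v b c (true :: w) =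
      b * r + c * u + mixtureReturn r s u v (b * r) (c * u) w := by
  simp only [mixtureReturn, typeReturn]; ring

lemma mixtureReturn_cons_false (w : List Bool) :
    mixtureReturn r s u v b c (false :: w) =
      b * s + c * v + mixtureReturn r s u v (b * s) (c * v) w := by
  simp only [mixtureReturn, typeReturn]; ring

lemma mixtureReturn_map_not (r s u v b c : ℝ) (w : List Bool) :
    mixtureReturn r s u v b c (w.map not) = mixtureReturn s r v u b c w := by
  simp only [mixtureReturn, typeReturn_map_not]

lemma mixtureReturn_comm (r s u v b c : ℝ) (w : List Bool) :
    mixtureReturn r s u v b c w = mixtureReturn u v r s c b w :=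
  add_comm _ _

lemma length_thresholdWord (c : Bool) {h n : ℕ} (hhn : h ≤ n) :
    (thresholdWord c h n).length = n := by
  simp [thresholdWord]; omega

lemma thresholdWord_succ_succ (c : Bool) (h n : ℕ) :
    thresholdWord c (h + 1) (n + 1) = c :: thresholdWord c h n := by
  simp [thresholdWord, List.replicate_succ]

lemma map_not_thresholdWord (c : Bool) (h n : ℕ) :
    (thresholdWord c h n).map not = thresholdWord (!c) h n := by
  simp [thresholdWord, List.map_replicate]

lemma mixtureReturn_le_replicate_true (hs : 0 ≤ s) (hsr : s ≤ r) (hv : 0 ≤ v) (hvu : v ≤ u)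
    (hb : 0 ≤ b) (hc : 0 ≤ c) (w : List Bool) :
    mixtureReturn r s u v b c w ≤ mixtureReturn r s u v b c (List.replicate w.length true) :=
  add_le_add (mul_le_mul_of_nonneg_left (typeReturn_le_replicate_true hs hsr w) hb)
    (mul_le_mul_of_nonneg_left (typeReturn_le_replicate_true hv hvu w) hc)

/-- If neither constant word beats `true :: replicate n false`, multiplying the two failed
comparisons contradicts `mul_geomSumSlope_mul_le`. -/
lemma mixtureReturn_true_cons_replicate_false_le (hs : 0 ≤ s) (hu : 0 ≤ u) (hsr : s ≤ r)
    (huv : u ≤ v) (hur : u ≤ r) (hsv : s ≤ v) (hb : 0 ≤ b) (hc : 0 ≤ c) (n : ℕ) :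
    mixtureReturn r s u v b c (true :: List.replicate n false) ≤
      max (mixtureReturn r s u v b c (List.replicate (n + 1) true))
        (mixtureReturn r s u v b c (List.replicate (n + 1) false)) := by
  simp only [mixtureReturn, typeReturn, typeReturn_replicate_true, typeReturn_replicate_false,
    ← geomSum_succ]
  generalize n + 1 = m
  by_contra! h
  obtain ⟨hT, hF⟩ := max_lt_iff.1 h
  have hrs := geomSum_sub_geomSum r s m
  have huv' := geomSum_sub_geomSum u v m
  have hT' : b * r * ((r - s) * geomSumSlope r s m) < c * u * ((v - u) * geomSumSlope u v m) := by
    linear_combination hT - b * r * hrs - c * u * huv'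
  have hF' : c * (v - u) * geomSum v m < b * (r - s) * geomSum s m := by linear_combination hF
  have hprod := mul_lt_mul'' hT' hF'
    (mul_nonneg (mul_nonneg hb (hs.trans hsr))
      (mul_nonneg (sub_nonneg.2 hsr) (geomSumSlope_nonneg (hs.trans hsr) hs m)))
    (mul_nonneg (mul_nonneg hc (sub_nonneg.2 huv)) (geomSum_nonneg (hu.trans huv) m))
  have hscaled := mul_le_mul_of_nonneg_left (mul_geomSumSlope_mul_le hu hur hs hsv m)
    (mul_nonneg (mul_nonneg hb hc) (mul_nonneg (sub_nonneg.2 hsr) (sub_nonneg.2 huv)))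
  linarith

lemma mixtureReturn_false_cons_replicate_true_le (hs : 0 ≤ s) (hu : 0 ≤ u) (hsr : s ≤ r)
    (huv : u ≤ v) (hur : u ≤ r) (hsv : s ≤ v) (hb : 0 ≤ b) (hc : 0 ≤ c) (n : ℕ) :
    mixtureReturn r s u v b c (false :: List.replicate n true) ≤
      max (mixtureReturn r s u v b c (List.replicate (n + 1) true))
        (mixtureReturn r s u v b c (List.replicate (n + 1) false)) := by
  have h := mixtureReturn_true_cons_replicate_false_le hu hs huv hsr hsv hur hc hb n
  simp only [mixtureReturn_comm v u s r c b, ← mixtureReturn_map_not r s u v, List.map_cons,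
    List.map_replicate, Bool.not_true, Bool.not_false] at h
  rwa [max_comm]

theorem mixtureReturn_le_max_replicate (hs : 0 ≤ s) (hu : 0 ≤ u) (hsr : s ≤ r) (huv : u ≤ v)
    (hur : u ≤ r) (hsv : s ≤ v) : ∀ (w : List Bool) {b c : ℝ}, 0 ≤ b → 0 ≤ c →
      mixtureReturn r s u v b c w ≤
        max (mixtureReturn r s u v b c (List.replicate w.length true))
          (mixtureReturn r s u v b c (List.replicate w.length false))
  | [], _, _, _, _ => by simp [mixtureReturn, typeReturn]
  | true :: w, b, c, hb, hc => by
    have ih := mixtureReturn_le_max_replicate hs hu hsr huv hur hsv w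
      (mul_nonneg hb (hs.trans hsr)) (mul_nonneg hc hu)
    calc mixtureReturn r s u v b c (true :: w)
        ≤ b * r + c * u +
            max (mixtureReturn r s u v (b * r) (c * u) (List.replicate w.length true))
              (mixtureReturn r s u v (b * r) (c * u) (List.replicate w.length false)) := by
          rw [mixtureReturn_cons_true]; gcongr
      _ = max (mixtureReturn r s u v b c (List.replicate (w.length + 1) true))
            (mixtureReturn r s u v b c (true :: List.replicate w.length false)) := by
          rw [← max_add_add_left, List.replicate_succ, mixtureReturn_cons_true,
            mixtureReturn_cons_true]
      _ ≤ _ := max_le (le_max_left _ _)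
          (mixtureReturn_true_cons_replicate_false_le hs hu hsr huv hur hsv hb hc _)
  | false :: w, b, c, hb, hc => by
    have ih := mixtureReturn_le_max_replicate hs hu hsr huv hur hsv w
      (mul_nonneg hb hs) (mul_nonneg hc (hu.trans huv))
    calc mixtureReturn r s u v b c (false :: w)
        ≤ b * s + c * v +
            max (mixtureReturn r s u v (b * s) (c * v) (List.replicate w.length true))
              (mixtureReturn r s u v (b * s) (c * v) (List.replicate w.length false)) := by
          rw [mixtureReturn_cons_false]; gcongr
      _ = max (mixtureReturn r s u v b c (false :: List.replicate w.length true))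
            (mixtureReturn r s u v b c (List.replicate (w.length + 1) false)) := by
          rw [← max_add_add_left, List.replicate_succ, mixtureReturn_cons_false,
            mixtureReturn_cons_false]
      _ ≤ _ := max_le
          (mixtureReturn_false_cons_replicate_true_le hs hu hsr huv hur hsv hb hc _)
          (le_max_right _ _)

lemma mixtureReturn_true_false_le_false_true (h : b * (r - s) ≤ c * (v - u)) (w : List Bool) :
    mixtureReturn r s u v b c (true :: false :: w) ≤
      mixtureReturn r s u v b c (false :: true :: w) := by
  simp only [mixtureReturn_cons_true, mixtureReturn_cons_false, mul_right_comm b r s,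
    mul_right_comm c u v]
  linarith

lemma mixtureReturn_false_cons_replicate_true_le_of_mul_sub_le (hu : 0 ≤ u) (hur : u ≤ r)
    (hsr : s ≤ r) (hb : 0 ≤ b) (hbc : c * (v - u) ≤ b * (r - s)) (n : ℕ) :
    mixtureReturn r s u v b c (false :: List.replicate n true) ≤
      mixtureReturn r s u v b c (List.replicate (n + 1) true) := by
  have hgeom : u * geomSum u n ≤ r * geomSum r n :=
    mul_le_mul hur (geomSum_le_geomSum hu hur n) (geomSum_nonneg hu n) (hu.trans hur)
  have hB : 0 ≤ 1 + u * geomSum u n := by nlinarith [geomSum_nonneg hu n]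
  simp only [List.replicate_succ, mixtureReturn, typeReturn, typeReturn_replicate_true]
  nlinarith [mul_le_mul_of_nonneg_right hbc hB,
    mul_le_mul_of_nonneg_left hgeom (mul_nonneg hb (sub_nonneg.2 hsr))]

/-- Since `u ≤ v ≤ s ≤ r`, both moves preserve the hypothesis `c * (v - u) ≤ b * (r - s)`. -/
theorem mixtureReturn_le_replicate_true_of_mul_sub_le (hu : 0 ≤ u) (huv : u ≤ v) (hvs : v ≤ s)
    (hsr : s ≤ r) : ∀ (w : List Bool) {b c : ℝ}, 0 ≤ b → 0 ≤ c → c * (v - u) ≤ b * (r - s) →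
      mixtureReturn r s u v b c w ≤ mixtureReturn r s u v b c (List.replicate w.length true)
  | [], _, _, _, _, _ => le_rfl
  | true :: w, b, c, hb, hc, hbc => by
    have ih := mixtureReturn_le_replicate_true_of_mul_sub_le hu huv hvs hsr w
      (b := b * r) (c := c * u) (mul_nonneg hb (by linarith)) (mul_nonneg hc hu)
      (by nlinarith [mul_le_mul_of_nonneg_left hbc hu, mul_nonneg hb (sub_nonneg.2 hsr)])
    rw [List.length_cons, List.replicate_succ, mixtureReturn_cons_true, mixtureReturn_cons_true]
    linarith
  | false :: w, b, c, hb, hc, hbc => by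
    have ih := mixtureReturn_le_replicate_true_of_mul_sub_le hu huv hvs hsr w
      (b := b * s) (c := c * v) (mul_nonneg hb (by linarith)) (mul_nonneg hc (hu.trans huv))
      (by nlinarith [mul_le_mul_of_nonneg_left hbc (hu.trans huv),
        mul_nonneg hb (sub_nonneg.2 hsr)])
    have hstep := mixtureReturn_false_cons_replicate_true_le_of_mul_sub_le hu
      (huv.trans (hvs.trans hsr)) hsr hb hbc w.length
    rw [mixtureReturn_cons_false] at hstep
    rw [List.length_cons, mixtureReturn_cons_false]
    linarith

/-- When `true` does not win outright, a leading `true, false` may be swapped to `false, true`. -/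
theorem exists_thresholdWord_false_ge (hu : 0 ≤ u) (huv : u ≤ v) (hvs : v ≤ s) (hsr : s ≤ r)
    (n : ℕ) : ∀ w : List Bool, w.length = n → ∀ {b c : ℝ}, 0 ≤ b → 0 ≤ c →
      ∃ h ≤ n, mixtureReturn r s u v b c w ≤
        mixtureReturn r s u v b c (thresholdWord false h n) := by
  have hs : 0 ≤ s := (hu.trans huv).trans hvs
  induction n with
  | zero =>
    intro w hw b c _ _
    exact ⟨0, le_rfl, by simp [List.length_eq_zero_iff.1 hw, thresholdWord]⟩
  | succ n ih =>
    intro w hw b c hb hc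
    by_cases hT : c * (v - u) ≤ b * (r - s)
    · refine ⟨0, n.succ.zero_le, ?_⟩
      simpa [thresholdWord, hw] using
        mixtureReturn_le_replicate_true_of_mul_sub_le hu huv hvs hsr w hb hc hT
    obtain _ | ⟨x, w⟩ := w
    · simp at hw
    replace hw : w.length = n := by simpa using hw
    cases x
    · obtain ⟨h, hhn, hle⟩ := ih w hw (mul_nonneg hb hs) (mul_nonneg hc (hu.trans huv))
      refine ⟨h + 1, by omega, ?_⟩
      rw [thresholdWord_succ_succ, mixtureReturn_cons_false, mixtureReturn_cons_false]
      linarith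
    obtain ⟨_ | h, hhn, hle⟩ := ih w hw (mul_nonneg hb (hs.trans hsr)) (mul_nonneg hc hu)
    · refine ⟨0, n.succ.zero_le, ?_⟩
      simp only [thresholdWord, List.replicate_zero, Nat.sub_zero, List.nil_append,
        Bool.not_false] at hle ⊢
      rw [List.replicate_succ, mixtureReturn_cons_true, mixtureReturn_cons_true]
      linarith
    obtain ⟨m, rfl⟩ : ∃ m, n = m + 1 := ⟨n - 1, by omega⟩
    obtain ⟨h', hh'm, hle'⟩ := ih (true :: thresholdWord false h m)
      (by simp [length_thresholdWord false (show h ≤ m by omega)])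
      (mul_nonneg hb hs) (mul_nonneg hc (hu.trans huv))
    refine ⟨h' + 1, by omega, ?_⟩
    calc mixtureReturn r s u v b c (true :: w)
        ≤ mixtureReturn r s u v b c (true :: false :: thresholdWord false h m) := by
          rw [← thresholdWord_succ_succ, mixtureReturn_cons_true, mixtureReturn_cons_true]
          linarith
      _ ≤ mixtureReturn r s u v b c (false :: true :: thresholdWord false h m) :=
          mixtureReturn_true_false_le_false_true (by linarith) _
      _ ≤ mixtureReturn r s u v b c (thresholdWord false (h' + 1) (m + 1 + 1)) := by
          rw [thresholdWord_succ_succ, mixtureReturn_cons_false, mixtureReturn_cons_false]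
          linarith

theorem exists_thresholdWord_ge_of_le (hs : 0 ≤ s) (hu : 0 ≤ u) (hv : 0 ≤ v) (hsr : s ≤ r)
    (w : List Bool) (hb : 0 ≤ b) (hc : 0 ≤ c) :
    ∃ (c' : Bool) (h : ℕ), h ≤ w.length ∧
      mixtureReturn r s u v b c w ≤ mixtureReturn r s u v b c (thresholdWord c' h w.length) := by
  rcases le_total v u with hvu | huv
  · exact ⟨true, w.length, le_rfl, by
      simpa [thresholdWord] using mixtureReturn_le_replicate_true hs hsr hv hvu hb hc w⟩
  rcases le_total r u with hru | hur
  · obtain ⟨h, hhn, hle⟩ := exists_thresholdWord_false_ge (r := v) (s := u) (u := s) (v := r)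
      hs hsr hru huv w.length (w.map not) (by simp) hc hb
    refine ⟨true, h, hhn, ?_⟩
    rwa [mixtureReturn_comm v u s r c b, mixtureReturn_comm v u s r c b, mixtureReturn_map_not,
      ← Bool.not_true, ← map_not_thresholdWord, mixtureReturn_map_not] at hle
  rcases le_total v s with hvs | hsv
  · exact ⟨false, exists_thresholdWord_false_ge hu huv hvs hsr w.length w rfl hb hc⟩
  rcases le_max_iff.1 (mixtureReturn_le_max_replicate hs hu hsr huv hur hsv w hb hc) with h | h
  · exact ⟨true, w.length, le_rfl, by simpa [thresholdWord] using h⟩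
  · exact ⟨false, w.length, le_rfl, by simpa [thresholdWord] using h⟩

theorem exists_thresholdWord_ge (hr : 0 ≤ r) (hs : 0 ≤ s) (hu : 0 ≤ u) (hv : 0 ≤ v)
    (w : List Bool) (hb : 0 ≤ b) (hc : 0 ≤ c) :
    ∃ (c' : Bool) (h : ℕ), h ≤ w.length ∧
      mixtureReturn r s u v b c w ≤ mixtureReturn r s u v b c (thresholdWord c' h w.length) := by
  rcases le_total s r with hsr | hrs
  · exact exists_thresholdWord_ge_of_le hs hu hv hsr w hb hc
  obtain ⟨c', h, hhn, hle⟩ := exists_thresholdWord_ge_of_le hr hv hu hrs (w.map not) hb hc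
  refine ⟨!c', h, by simpa using hhn, ?_⟩
  rwa [List.length_map, mixtureReturn_map_not, ← Bool.not_not c', ← map_not_thresholdWord,
    mixtureReturn_map_not] at hle

end Words

def prefixWord (a : ℕ → Bool) (n : ℕ) : List Bool := (List.range n).map a

@[simp] lemma length_prefixWord (a : ℕ → Bool) (n : ℕ) : (prefixWord a n).length = n := by
  simp [prefixWord]

lemma prefixWord_succ (a : ℕ → Bool) (n : ℕ) :
    prefixWord a (n + 1) = prefixWord a n ++ [a n] := by
  simp [prefixWord, List.range_succ]

lemma prefixWord_thresholdSeq {c : Bool} {h n : ℕ} (hhn : h ≤ n) :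
    prefixWord (thresholdSeq c h) n = thresholdWord c h n := by
  refine List.ext_getElem (by simp [thresholdWord]; omega) fun i hi _ => ?_
  simp [prefixWord, thresholdWord, thresholdSeq, List.getElem_append]

lemma cnt1_eq_count (a : ℕ → Bool) (n : ℕ) : cnt1 a n = (prefixWord a n).count true := by
  induction n with
  | zero => rfl
  | succ n ih =>
    rw [cnt1, card_filter, sum_range_succ, ← card_filter, ← cnt1, ih, prefixWord_succ,
      List.count_append]
    cases a n <;> simp

lemma cnt2_eq_count (a : ℕ → Bool) (n : ℕ) : cnt2 a n = (prefixWord a n).count false := by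
  induction n with
  | zero => rfl
  | succ n ih =>
    rw [cnt2, card_filter, sum_range_succ, ← card_filter, ← cnt2, ih, prefixWord_succ,
      List.count_append]
    cases a n <;> simp

lemma cnt1_add_cnt2 (a : ℕ → Bool) (n : ℕ) : cnt1 a n + cnt2 a n = n := by
  simpa [cnt1, cnt2] using card_filter_add_card_filter_not (s := range n) (p := fun j => a j = true)

lemma pow_cnt1_mul_pow_cnt2_le {p q ρ : ℝ} (hp : 0 ≤ p) (hpρ : p ≤ ρ) (hq : 0 ≤ q) (hqρ : q ≤ ρ)
    (a : ℕ → Bool) (n : ℕ) : p ^ cnt1 a n * q ^ cnt2 a n ≤ ρ ^ n := by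
  have hρ : 0 ≤ ρ := hp.trans hpρ
  calc p ^ cnt1 a n * q ^ cnt2 a n ≤ ρ ^ cnt1 a n * ρ ^ cnt2 a n := by gcongr
    _ = ρ ^ n := by rw [← pow_add, cnt1_add_cnt2]

lemma sum_range_pow_cnt1_mul_pow_cnt2 (p q : ℝ) (a : ℕ → Bool) (n : ℕ) :
    ∑ i ∈ range n, p ^ cnt1 a (i + 1) * q ^ cnt2 a (i + 1) = typeReturn p q (prefixWord a n) := by
  induction n with
  | zero => simp [prefixWord, typeReturn]
  | succ n ih =>
    rw [sum_range_succ, ih, prefixWord_succ, typeReturn_append_singleton, ← prefixWord_succ,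
      cnt1_eq_count, cnt2_eq_count]

lemma tsum_mem_Icc_sum_range {f : ℕ → ℝ} {ρ : ℝ} (hf0 : ∀ i, 0 ≤ f i) (hfρ : ∀ i, f i ≤ ρ ^ i)
    (hρ : ρ < 1) (n : ℕ) :
    ∑' i, f i ∈ Set.Icc (∑ i ∈ range n, f i) (∑ i ∈ range n, f i + ρ ^ n / (1 - ρ)) := by
  have hρ0 : 0 ≤ ρ := (hf0 1).trans (by simpa using hfρ 1)
  have hgeom := summable_geometric_of_lt_one hρ0 hρ
  have hf : Summable f := .of_nonneg_of_le hf0 hfρ hgeom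
  refine ⟨hf.sum_le_tsum _ fun i _ => hf0 i, ?_⟩
  rw [← hf.sum_add_tsum_nat_add n]
  gcongr
  calc ∑' i, f (i + n) ≤ ∑' i, ρ ^ n * ρ ^ i :=
        ((summable_nat_add_iff n).2 hf).tsum_le_tsum
          (fun i => by rw [← pow_add, add_comm]; exact hfρ _) (hgeom.mul_left _)
    _ = ρ ^ n / (1 - ρ) := by rw [tsum_mul_left, tsum_geometric_of_lt_one hρ0 hρ, div_eq_mul_inv]

theorem twoTypeReturn_mem_Icc {p1x p2x p1y p2y b ρ : ℝ} (h1x : 0 ≤ p1x) (h2x : 0 ≤ p2x)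
    (h1y : 0 ≤ p1y) (h2y : 0 ≤ p2y) (h1xρ : p1x ≤ ρ) (h2xρ : p2x ≤ ρ) (h1yρ : p1y ≤ ρ)
    (h2yρ : p2y ≤ ρ) (hρ : ρ < 1) (hb : b ∈ Set.Icc (0 : ℝ) 1) (a : ℕ → Bool) (n : ℕ) :
    twoTypeReturn p1x p2x p1y p2y b a ∈
      Set.Icc (mixtureReturn p1x p2x p1y p2y b (1 - b) (prefixWord a n))
        (mixtureReturn p1x p2x p1y p2y b (1 - b) (prefixWord a n) + ρ ^ n / (1 - ρ)) := by
  have hsum : ∑ i ∈ range n, (b * p1x ^ cnt1 a (i + 1) * p2x ^ cnt2 a (i + 1)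
      + (1 - b) * p1y ^ cnt1 a (i + 1) * p2y ^ cnt2 a (i + 1)) =
        mixtureReturn p1x p2x p1y p2y b (1 - b) (prefixWord a n) := by
    simp only [mul_assoc, sum_add_distrib, ← mul_sum, sum_range_pow_cnt1_mul_pow_cnt2,
      mixtureReturn]
  rw [← hsum]
  have hb0 : 0 ≤ b := hb.1
  have hb1 : 0 ≤ 1 - b := sub_nonneg.2 hb.2
  refine tsum_mem_Icc_sum_range (fun i => by positivity) (fun i => ?_) hρ n
  have hx := pow_cnt1_mul_pow_cnt2_le h1x h1xρ h2x h2xρ a (i + 1)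
  have hy := pow_cnt1_mul_pow_cnt2_le h1y h1yρ h2y h2yρ a (i + 1)
  calc b * p1x ^ cnt1 a (i + 1) * p2x ^ cnt2 a (i + 1)
        + (1 - b) * p1y ^ cnt1 a (i + 1) * p2y ^ cnt2 a (i + 1)
      ≤ b * ρ ^ (i + 1) + (1 - b) * ρ ^ (i + 1) := by
        rw [mul_assoc, mul_assoc]; gcongr
    _ = ρ ^ i * ρ := by ring
    _ ≤ ρ ^ i := mul_le_of_le_one_right (pow_nonneg (h1x.trans h1xρ) i) hρ.le

end DepartingBandit

open DepartingBandit

theorem threshold_approximation_general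
    (p1x p2x p1y p2y b ε : ℝ) (H : ℕ)
    (hε : ε ∈ Set.Ioo (0 : ℝ) 1)
    (h1x : p1x ∈ Set.Ioo (0 : ℝ) 1) (h2x : p2x ∈ Set.Ioo (0 : ℝ) 1)
    (h1y : p1y ∈ Set.Ioo (0 : ℝ) 1) (h2y : p2y ∈ Set.Ioo (0 : ℝ) 1)
    (hbound : p1x ≤ 1 - ε ∧ p2x ≤ 1 - ε ∧ p1y ≤ 1 - ε ∧ p2y ≤ 1 - ε)
    (hb : b ∈ Set.Icc (0 : ℝ) 1)
    (astar : ℕ → Bool) :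
    ∃ c : Bool, ∃ h : ℕ, h ≤ H ∧
      twoTypeReturn p1x p2x p1y p2y b astar
          - twoTypeReturn p1x p2x p1y p2y b (thresholdSeq c h)
        ≤ (1 - ε) ^ H / ε := by
  obtain ⟨h1xρ, h2xρ, h1yρ, h2yρ⟩ := hbound
  have hρ : 1 - ε < 1 := by linarith [hε.1]
  obtain ⟨c, h, hhH, hdom⟩ := exists_thresholdWord_ge h1x.1.le h2x.1.le h1y.1.le h2y.1.le
    (prefixWord astar H) hb.1 (sub_nonneg.2 hb.2)
  rw [length_prefixWord] at hhH hdom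
  rw [← prefixWord_thresholdSeq hhH] at hdom
  have hupper := (twoTypeReturn_mem_Icc h1x.1.le h2x.1.le h1y.1.le h2y.1.le
    h1xρ h2xρ h1yρ h2yρ hρ hb astar H).2
  have hlower := (twoTypeReturn_mem_Icc h1x.1.le h2x.1.le h1y.1.le h2y.1.le
    h1xρ h2xρ h1yρ h2yρ hρ hb (thresholdSeq c h) H).1
  rw [sub_sub_cancel] at hupper
  exact ⟨c, h, hhH, by linarith⟩

/-- In the two-type two-category departing bandit with all
click probabilities at most `1 - ε`, if `astar` is an optimal deterministic
policy, then its expected return exceeds that of the best `(c,h)`-threshold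
policy with `h ≤ H` by at most `(1-ε)^H / ε`. -/
theorem threshold_approximation
    (p1x p2x p1y p2y b ε : ℝ) (H : ℕ)
    (hε : ε ∈ Set.Ioo (0 : ℝ) 1)
    (h1x : p1x ∈ Set.Ioo (0 : ℝ) 1) (h2x : p2x ∈ Set.Ioo (0 : ℝ) 1)
    (h1y : p1y ∈ Set.Ioo (0 : ℝ) 1) (h2y : p2y ∈ Set.Ioo (0 : ℝ) 1)
    (hbound : p1x ≤ 1 - ε ∧ p2x ≤ 1 - ε ∧ p1y ≤ 1 - ε ∧ p2y ≤ 1 - ε)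
    (hb : b ∈ Set.Icc (0 : ℝ) 1)
    (astar : ℕ → Bool)
    (hopt : ∀ a : ℕ → Bool,
      twoTypeReturn p1x p2x p1y p2y b a ≤ twoTypeReturn p1x p2x p1y p2y b astar) :
    ∃ c : Bool, ∃ h : ℕ, h ≤ H ∧
      twoTypeReturn p1x p2x p1y p2y b astar
          - twoTypeReturn p1x p2x p1y p2y b (thresholdSeq c h)
        ≤ (1 - ε) ^ H / ε :=
  threshold_approximation_general p1x p2x p1y p2y b ε H hε h1x h2x h1y h2y hbound hb astar
end
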